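/- Let x be a real obs × vars matrix whose columns are all nonzero, let y ∈ ℝ^obs, and let (a^k) be any sequence in ℝ^vars produced by iterating the SolveBak update: at step k a column index j_k is chosen, da_k = ⟨x_{j_k}, e^k⟩ / ⟨x_{j_k}, x_{j_k}⟩ where e^k = y - x a^k, and a^{k+1} = a^k + da_k • e_{j_k}. Then the sequence of squared residual norms (‖y - x a^k‖²) is nonincreasing in k. -/

import Mathlib

open scoped RealInnerProductSpace BigOperators

/-- The `j`-th column of the matrix `x`, as a vector in Euclidean space. -/
def col {obs vars : ℕ} (x : Matrix (Fin obs) (Fin vars) ℝ) (j : Fin vars) :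
    EuclideanSpace ℝ (Fin obs) :=
  WithLp.toLp 2 (fun i => x i j)

/-- The residual `y - x a` of the linear system `x a = y`, as a vector in Euclidean space. -/
def resid {obs vars : ℕ} (x : Matrix (Fin obs) (Fin vars) ℝ)
    (y : Fin obs → ℝ) (a : Fin vars → ℝ) : EuclideanSpace ℝ (Fin obs) :=
  WithLp.toLp 2 (fun i => y i - x.mulVec a i)

/-! Updating one coordinate of `a` changes the residual `e` to `e - da • x_j`, and with the
SolveBak step size `da = ⟪x_j, e⟫ / ⟪x_j, x_j⟫` this is the orthogonal projection of `e` onto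
the complement of the line spanned by `x_j`; projections do not increase norms. -/

lemma norm_sub_inner_div_inner_self_smul_le {𝕜 E : Type*} [RCLike 𝕜] [NormedAddCommGroup E]
    [InnerProductSpace 𝕜 E] (c e : E) :
    ‖e - (inner 𝕜 c e / inner 𝕜 c c) • c‖ ≤ ‖e‖ := by
  have hproj : e - (inner 𝕜 c e / inner 𝕜 c c) • c = (𝕜 ∙ c)ᗮ.starProjection e := by
    rw [Submodule.starProjection_orthogonal', sub_apply,
      Submodule.starProjection_singleton, inner_self_eq_norm_sq_to_K]
    simp
  exact hproj ▸ Submodule.norm_starProjection_apply_le _ e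

lemma Function.update_add_eq_add_single {ι M : Type*} [DecidableEq ι] [AddZeroClass M]
    (f : ι → M) (i : ι) (m : M) :
    Function.update f i (f i + m) = f + Pi.single i m := by
  ext k
  rcases eq_or_ne k i with rfl | hk <;> simp [*]

lemma resid_update_add {obs vars : ℕ} (x : Matrix (Fin obs) (Fin vars) ℝ)
    (y : Fin obs → ℝ) (a : Fin vars → ℝ) (j : Fin vars) (d : ℝ) :
    resid x y (Function.update a j (a j + d)) = resid x y a - d • col x j := by
  ext i
  simp only [resid, col, Function.update_add_eq_add_single, Matrix.mulVec_add,
    Matrix.mulVec_single, op_smul_eq_smul, Pi.add_apply, Pi.smul_apply, Matrix.col_apply,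
    smul_eq_mul, PiLp.sub_apply, PiLp.smul_apply]
  ring

theorem solvebak_residuals_antitone_general (obs vars : ℕ)
    (x : Matrix (Fin obs) (Fin vars) ℝ)
    (y : Fin obs → ℝ)
    (a : ℕ → Fin vars → ℝ) (jseq : ℕ → Fin vars) (da : ℕ → ℝ)
    (hda : ∀ k, da k =
      ⟪col x (jseq k), resid x y (a k)⟫ / ⟪col x (jseq k), col x (jseq k)⟫)
    (hstep : ∀ k, a (k + 1) = Function.update (a k) (jseq k) (a k (jseq k) + da k)) :
    Antitone (fun k => ‖resid x y (a k)‖ ^ 2) := by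
  refine antitone_nat_of_succ_le fun k => ?_
  rw [hstep k, resid_update_add, hda k]
  gcongr
  exact norm_sub_inner_div_inner_self_smul_le _ _

theorem solvebak_residuals_antitone (obs vars : ℕ) (hobs : 0 < obs) (hvars : 0 < vars)
    (x : Matrix (Fin obs) (Fin vars) ℝ) (hcols : ∀ j, col x j ≠ 0)
    (y : Fin obs → ℝ)
    (a : ℕ → Fin vars → ℝ) (jseq : ℕ → Fin vars) (da : ℕ → ℝ)
    (hda : ∀ k, da k =
      ⟪col x (jseq k), resid x y (a k)⟫ / ⟪col x (jseq k), col x (jseq k)⟫)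
    (hstep : ∀ k, a (k + 1) = Function.update (a k) (jseq k) (a k (jseq k) + da k)) :
    Antitone (fun k => ‖resid x y (a k)‖ ^ 2) :=
  solvebak_residuals_antitone_general obs vars x y a jseq da hda hstep
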